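/- Let T be a tree on n > 1 vertices with a fixed vertex v and a leaf l ≠ v. Then the number of subtrees of T containing both v and l is at most 2^{n-2}, with equality if and only if T is the star S_n with center v. -/
import Mathlib


open SimpleGraph

/-- The number of connected induced subgraphs of `G`, i.e. the number of nonempty
vertex subsets of `G` inducing a connected subgraph. -/
noncomputable def numConn {V : Type*} (G : SimpleGraph V) : ℕ :=
  Nat.card {s : Finset V // (G.induce (s : Set V)).Connected}

/-- The number of `k`-vertex connected induced subgraphs of `G`. -/
noncomputable def numConnK {V : Type*} (G : SimpleGraph V) (k : ℕ) : ℕ :=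
  Nat.card {s : Finset V // s.card = k ∧ (G.induce (s : Set V)).Connected}

/-- The number of connected induced subgraphs of `G` containing the vertex `v`. -/
noncomputable def numConnAt {V : Type*} (G : SimpleGraph V) (v : V) : ℕ :=
  Nat.card {s : Finset V // v ∈ s ∧ (G.induce (s : Set V)).Connected}

/-- The star graph on `Fin n`, with center `0`. -/
def starGraph (n : ℕ) : SimpleGraph (Fin n) :=
  SimpleGraph.fromRel (fun i _ => (i : ℕ) = 0)

/-- The tadpole graph `G_{p,q}` (for `p ≥ 3`): the path `0 - 1 - ⋯ - (p+q-1)` together with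
the edge `{0, p-1}` closing a cycle of length `p`; the tail of length `q` hangs at `p-1`. -/
def tadpole (p q : ℕ) : SimpleGraph (Fin (p + q)) :=
  SimpleGraph.fromRel (fun i j => (i : ℕ) + 1 = j ∨ ((i : ℕ) = 0 ∧ (j : ℕ) = p - 1))

/-- The banner graph `B_n` (for `n ≥ 4`): a `4`-cycle `0-1-2-3-0` with `n - 4` pendant
vertices attached to vertex `0`. -/
def banner (n : ℕ) : SimpleGraph (Fin n) :=
  SimpleGraph.fromRel (fun i j =>
    ((i : ℕ) + 1 = j ∧ (j : ℕ) ≤ 3) ∨ ((i : ℕ) = 0 ∧ (j : ℕ) = 3) ∨ ((i : ℕ) = 0 ∧ 4 ≤ (j : ℕ)))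

/-- The graph `Q_n` (for `n > 2`): the star on `n` vertices with center `0`, plus an edge
joining the two leaves `1` and `2`. -/
def Qgraph (n : ℕ) : SimpleGraph (Fin n) :=
  SimpleGraph.fromRel (fun i j => (i : ℕ) = 0 ∨ ((i : ℕ) = 1 ∧ (j : ℕ) = 2))


lemma aux_card_pairs {V : Type*} [Fintype V] (v l : V) (hlv : l ≠ v) :
    Nat.card {s : Finset V // v ∈ s ∧ l ∈ s} = 2 ^ (Fintype.card V - 2) := by
  classical
  have e : {s : Finset V // v ∈ s ∧ l ∈ s} ≃
      {t : Finset V // t ∈ (Finset.univ \ {v, l} : Finset V).powerset} :=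
    { toFun := fun s => ⟨s.1 \ {v, l}, by
        simp only [Finset.mem_powerset]
        exact Finset.sdiff_subset_sdiff (Finset.subset_univ _) le_rfl⟩
      invFun := fun t => ⟨t.1 ∪ {v, l}, by simp⟩
      left_inv := fun s => by
        apply Subtype.ext
        exact Finset.sdiff_union_of_subset (by
          simp [Finset.insert_subset_iff, s.2.1, s.2.2])
      right_inv := fun t => by
        apply Subtype.ext
        have ht := Finset.mem_powerset.mp t.2
        rw [Finset.subset_sdiff] at ht
        exact Finset.union_sdiff_cancel_right ht.2 }
  rw [Nat.card_congr e, Nat.card_eq_fintype_card, Fintype.card_coe,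
    Finset.card_powerset, Finset.card_sdiff_of_subset (Finset.subset_univ _),
    Finset.card_univ, Finset.card_pair (Ne.symm hlv)]

lemma aux_induce_conn_of_star {V : Type*} (T : SimpleGraph V) (v : V)
    (h : ∀ u : V, u ≠ v → T.Adj v u) (s : Set V) (hv : v ∈ s) :
    (T.induce s).Connected := by
  have key : ∀ a : s, (T.induce s).Reachable a ⟨v, hv⟩ := by
    intro a
    by_cases hav : (a : V) = v
    · have : a = ⟨v, hv⟩ := Subtype.ext hav
      rw [this]
    · have hadj : (T.induce s).Adj a ⟨v, hv⟩ := by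
        simp only [comap_adj, Function.Embedding.coe_subtype]
        exact (h a hav).symm
      exact hadj.reachable
  haveI : Nonempty s := ⟨⟨v, hv⟩⟩
  exact ⟨fun a b => (key a).trans (key b).symm⟩

lemma aux_exists_adj {V : Type*} (T : SimpleGraph V) (s : Set V)
    (h : (T.induce s).Connected) {a b : V} (ha : a ∈ s) (hb : b ∈ s) (hab : a ≠ b) :
    ∃ w ∈ s, T.Adj a w := by
  obtain ⟨p⟩ := h.preconnected ⟨a, ha⟩ ⟨b, hb⟩
  have hl : 0 < p.length := by
    rcases Nat.eq_zero_or_pos p.length with h0 | h0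
    · exact absurd (congrArg Subtype.val (p.eq_of_length_eq_zero h0)) hab
    · exact h0
  have hadj := p.adj_getVert_succ hl
  rw [p.getVert_zero] at hadj
  refine ⟨(p.getVert 1 : V), (p.getVert 1).2, ?_⟩
  simpa [comap_adj] using hadj
theorem stmt12 {V : Type*} [Fintype V] (T : SimpleGraph V) (hT : T.IsTree)
    (hn : 1 < Fintype.card V) (v l : V) (hlv : l ≠ v) (hleaf : ∃! u : V, T.Adj l u) :
    Nat.card {s : Finset V // v ∈ s ∧ l ∈ s ∧ (T.induce (s : Set V)).Connected}
        ≤ 2 ^ (Fintype.card V - 2) ∧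
      (Nat.card {s : Finset V // v ∈ s ∧ l ∈ s ∧ (T.induce (s : Set V)).Connected}
          = 2 ^ (Fintype.card V - 2) ↔ ∀ u : V, u ≠ v → T.Adj v u) := by
  classical
  have hpairs := aux_card_pairs v l hlv
  let f : {s : Finset V // v ∈ s ∧ l ∈ s ∧ (T.induce (s : Set V)).Connected} →
      {s : Finset V // v ∈ s ∧ l ∈ s} := fun s => ⟨s.1, s.2.1, s.2.2.1⟩
  have hf : Function.Injective f := fun a b h => by have h2 := congrArg Subtype.val h; exact Subtype.ext h2
  have hle : Nat.card {s : Finset V // v ∈ s ∧ l ∈ s ∧ (T.induce (s : Set V)).Connected}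
      ≤ 2 ^ (Fintype.card V - 2) := by
    rw [← hpairs]; exact Nat.card_le_card_of_injective f hf
  refine ⟨hle, ⟨?_, ?_⟩⟩
  · intro heq
    have hbij : Function.Bijective f :=
      (Nat.bijective_iff_injective_and_card f).mpr ⟨hf, by rw [heq, hpairs]⟩
    have hall : ∀ s : Finset V, v ∈ s → l ∈ s → (T.induce (s : Set V)).Connected := by
      intro s hvs hls
      obtain ⟨a, ha⟩ := hbij.2 ⟨s, hvs, hls⟩
      have hval : a.1 = s := congrArg Subtype.val ha
      rw [← hval]
      exact a.2.2.2
    have hvl : T.Adj v l := by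
      have hc := hall {v, l} (by simp) (by simp)
      obtain ⟨w, hw, hadj⟩ :=
        aux_exists_adj T _ hc (a := l) (b := v) (by simp) (by simp) hlv
      have hwm : w = v ∨ w = l := by simpa using hw
      rcases hwm with rfl | rfl
      · exact hadj.symm
      · exact absurd rfl hadj.ne'
    intro u hu
    by_cases hul : u = l
    · rw [hul]; exact hvl
    · have hc := hall {v, l, u} (by simp) (by simp)
      obtain ⟨w, hw, hadj⟩ :=
        aux_exists_adj T _ hc (a := u) (b := v) (by simp) (by simp) hu
      have hwm : w = v ∨ w = l ∨ w = u := by simpa using hw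
      rcases hwm with rfl | rfl | rfl
      · exact hadj.symm
      · obtain ⟨n, hn, huniq⟩ := hleaf
        have h1 := huniq u hadj.symm
        have h2 := huniq v hvl.symm
        exact absurd (h1.trans h2.symm) hu
      · exact absurd rfl hadj.ne
  · intro hstar
    have hiff : ∀ s : Finset V,
        (v ∈ s ∧ l ∈ s ∧ (T.induce (s : Set V)).Connected) ↔ (v ∈ s ∧ l ∈ s) := by
      intro s
      refine ⟨fun h => ⟨h.1, h.2.1⟩, fun h => ⟨h.1, h.2, ?_⟩⟩
      exact aux_induce_conn_of_star T v hstar _ (Finset.mem_coe.mpr h.1)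
    rw [Nat.card_congr (Equiv.subtypeEquivRight hiff), hpairs]
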